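/- Assume (A1) and (A3), and fix t ∈ {0,1}. Let λ† : 𝒳 → [ε, 1−ε] be measurable and τ† : 𝒳 → ℝ be bounded measurable, and suppose that either (i) λ†(X) = λ₁(X) almost surely, or (ii) τ†(X) = τ_t(1,X) almost surely. Then the influence-function expression is doubly robust: E[ R·1{T=t}·Y / (λ†(X)·π_{t1}) + (1 − R·1{T=t} / (λ†(X)·π_{t1}))·τ†(X) ] = μ_t. -/

import Mathlib

/-!
Write `A = {R = 1}`, `λ = P(A | X)`, `π = P(T = t | R = 1)` and `Z = Y_t`. Consistency gives
`Y = Z` on `{T = t}`, so the augmented inverse-probability-weighted (AIPW) integrand equals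
`τ† + π⁻¹ 1_A 1_{T=t} (Z - τ†) / λ†`. Inside the trial `T` is independent of `(Y₁, Y₀, X)` (A1),
so `1_{T=t}` integrates to `π` and the expectation becomes `E[τ†] + E[1_A (Z - τ†) / λ†]`.

By (A3), for every `σ(X)`-measurable `s` the law of `(Y₁, Y₀)` under `P` restricted to `s ∩ A`
equals its law under the measure with density `λ` on `s`; hence
`E[1_A f(X) g(Y₁, Y₀)] = E[λ f(X) g(Y₁, Y₀)]` for bounded `f`. If `λ† = λ`, this turns the
second term into `E[Z - τ†]`. If `τ† = E[Z | X, R = 1]`, the second term vanishes by the tower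
property under `P(· | A)`, and inverse probability weighting gives
`E[Z] = E[1_A Z / λ] = E[1_A τ† / λ] = E[τ†]`.
-/

open MeasureTheory ProbabilityTheory Set

noncomputable section

/-- The σ-algebra on `Ω` generated by the map `X`. -/
def sigmaX {Ω 𝒳 : Type*} [MeasurableSpace 𝒳] (X : Ω → 𝒳) : MeasurableSpace Ω :=
  MeasurableSpace.comap X inferInstance

/-- Conditional expectation of `f` given the σ-algebra `m'` under the measure `μ`. -/
def cexp {Ω : Type*} (m' : MeasurableSpace Ω) {m0 : MeasurableSpace Ω} (μ : Measure Ω)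
    (f : Ω → ℝ) : Ω → ℝ :=
  MeasureTheory.condExp m' μ f

/-- Conditional probability of the event `s` given the σ-algebra `m'`, as a function. -/
def cprob {Ω : Type*} (m' : MeasurableSpace Ω) {m0 : MeasurableSpace Ω} (μ : Measure Ω)
    (s : Set Ω) : Ω → ℝ :=
  cexp m' μ (s.indicator fun _ => (1 : ℝ))

/-- `f` and `g` are conditionally independent given the σ-algebra `m'` under `μ` :
conditional probabilities of joint events factorize. -/
def CondIndepFunGiven {Ω β γ : Type*} [MeasurableSpace β]
    [MeasurableSpace γ] (m' : MeasurableSpace Ω) {m0 : MeasurableSpace Ω}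
    (f : Ω → β) (g : Ω → γ) (μ : Measure Ω) : Prop :=
  ∀ s u, MeasurableSet s → MeasurableSet u →
    cprob m' μ (f ⁻¹' s ∩ g ⁻¹' u)
      =ᵐ[μ] fun ω => cprob m' μ (f ⁻¹' s) ω * cprob m' μ (g ⁻¹' u) ω

lemma norm_inv_le_inv_of_le {ε x : ℝ} (hε : 0 < ε) (hx : ε ≤ x) : ‖x⁻¹‖ ≤ ε⁻¹ := by
  rw [norm_inv, Real.norm_of_nonneg (hε.le.trans hx)]
  exact inv_anti₀ hε hx

section CondProb

variable {Ω : Type*} {m m0 : MeasurableSpace Ω} {P : Measure Ω}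

lemma cprob_nonneg (s : Set Ω) : 0 ≤ᵐ[P] cprob m P s :=
  condExp_nonneg (ae_of_all _ (indicator_nonneg fun _ _ => zero_le_one))

lemma norm_cprob_le_one [IsFiniteMeasure P] (hm : m ≤ m0) {s : Set Ω} (hs : MeasurableSet s) :
    ∀ᵐ ω ∂P, ‖cprob m P s ω‖ ≤ 1 := by
  have h := condExp_mono (m := m) (μ := P) ((integrable_const (1 : ℝ)).indicator hs)
    (integrable_const 1) (ae_of_all _ (indicator_le_self' fun _ _ => zero_le_one))
  rw [condExp_const hm] at h
  filter_upwards [h, cprob_nonneg (m := m) (P := P) s] with ω hle hnonneg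
  rw [Real.norm_of_nonneg hnonneg]
  exact hle

lemma stronglyMeasurable_cprob (s : Set Ω) : StronglyMeasurable[m] (cprob m P s) :=
  stronglyMeasurable_condExp

lemma MeasureTheory.Integrable.cond {Z : Ω → ℝ} (hZ : Integrable Z P) {A : Set Ω} (hPA : P A ≠ 0) :
    Integrable Z P[|A] :=
  hZ.restrict.smul_measure (ENNReal.inv_ne_top.2 hPA)

lemma integral_indicator_eq_measureReal_mul_integral_cond [IsFiniteMeasure P] {A : Set Ω}
    (hA : MeasurableSet A) (hPA : P A ≠ 0) (f : Ω → ℝ) :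
    ∫ ω, A.indicator f ω ∂P = P.real A * ∫ ω, f ω ∂P[|A] := by
  rw [integral_indicator hA, ProbabilityTheory.cond, integral_smul_measure, smul_eq_mul,
    ENNReal.toReal_inv, ← mul_assoc, ← measureReal_def,
    mul_inv_cancel₀ ((measureReal_ne_zero_iff).2 hPA), one_mul]

lemma integral_mul_condExp [IsFiniteMeasure P] (hm : m ≤ m0) {f Z : Ω → ℝ}
    (hf : StronglyMeasurable[m] f) {c : ℝ} (hfc : ∀ᵐ ω ∂P, ‖f ω‖ ≤ c) (hZ : Integrable Z P) :
    ∫ ω, f ω * (P[Z|m]) ω ∂P = ∫ ω, f ω * Z ω ∂P := by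
  rw [← integral_condExp hm (f := fun ω => f ω * Z ω)]
  exact integral_congr_ae (condExp_stronglyMeasurable_mul_of_bound hm hf hZ c hfc).symm

lemma integral_indicator_eq_integral_cprob_mul [IsFiniteMeasure P] (hm : m ≤ m0) {A : Set Ω}
    (hA : MeasurableSet A) {f : Ω → ℝ} (hf : StronglyMeasurable[m] f) {c : ℝ}
    (hfc : ∀ᵐ ω ∂P, ‖f ω‖ ≤ c) :
    ∫ ω, A.indicator f ω ∂P = ∫ ω, cprob m P A ω * f ω ∂P := by
  calc ∫ ω, A.indicator f ω ∂P = ∫ ω, f ω * A.indicator (fun _ => (1 : ℝ)) ω ∂P := by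
        simp only [← indicator_mul_right, mul_one]
    _ = ∫ ω, cprob m P A ω * f ω ∂P := by
        rw [← integral_mul_condExp hm hf hfc ((integrable_const 1).indicator hA)]
        simp only [cprob, cexp, mul_comm]

lemma le_measureReal_of_ae_le_cprob [IsProbabilityMeasure P]
    (hm : m ≤ m0) {B : Set Ω} (hB : MeasurableSet B) {c : ℝ}
    (hc : ∀ᵐ ω ∂P, c ≤ cprob m P B ω) : c ≤ P.real B := by
  have h := integral_mono_ae (integrable_const c) integrable_condExp hc
  rwa [integral_condExp hm, integral_indicator_const _ hB, integral_const, probReal_univ,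
    smul_eq_mul, smul_eq_mul, one_mul, mul_one] at h

end CondProb

def CondIndepSetFunGiven {Ω γ : Type*} [MeasurableSpace γ] (m : MeasurableSpace Ω)
    {_ : MeasurableSpace Ω} (A : Set Ω) (W : Ω → γ) (P : Measure Ω) : Prop :=
  ∀ u, MeasurableSet u →
    cprob m P (A ∩ W ⁻¹' u) =ᵐ[P] fun ω => cprob m P A ω * cprob m P (W ⁻¹' u) ω

section MissingAtRandom

variable {Ω γ : Type*} {m m0 : MeasurableSpace Ω} [MeasurableSpace γ] {P : Measure Ω}
  {A : Set Ω} {W : Ω → γ}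

lemma CondIndepFunGiven.condIndepSetFunGiven_preimage {β : Type*} [MeasurableSpace β]
    {R : Ω → β} (hRW : CondIndepFunGiven m R W P) {s : Set β} (hs : MeasurableSet s) :
    CondIndepSetFunGiven m (R ⁻¹' s) W P :=
  fun u hu => hRW s u hs hu

variable [IsFiniteMeasure P]

lemma map_restrict_inter_eq_map_withDensity_cprob (hm : m ≤ m0) (hA : MeasurableSet A)
    (hW : Measurable W) (hAW : CondIndepSetFunGiven m A W P)
    {s : Set Ω} (hs : MeasurableSet[m] s) :
    (P.restrict (s ∩ A)).map W
      = ((P.restrict s).withDensity fun ω => ENNReal.ofReal (cprob m P A ω)).map W := by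
  ext u hu
  have hWu : MeasurableSet (W ⁻¹' u) := hW hu
  have hlam : Integrable (cprob m P A) P := integrable_condExp
  rw [Measure.map_apply hW hu, Measure.map_apply hW hu, withDensity_apply _ hWu,
    Measure.restrict_apply hWu, Measure.restrict_restrict hWu,
    ← ofReal_integral_eq_lintegral_ofReal hlam.integrableOn (ae_restrict_of_ae (cprob_nonneg A)),
    ← ofReal_measureReal]
  congr 1
  have hpull : P[(W ⁻¹' u).indicator (cprob m P A)|m]
      =ᵐ[P] fun ω => cprob m P A ω * cprob m P (W ⁻¹' u) ω := by
    have h := condExp_mul_of_stronglyMeasurable_left (m := m) (μ := P)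
      (stronglyMeasurable_cprob (P := P) A) ?_ ((integrable_const (1 : ℝ)).indicator hWu)
    · refine (condExp_congr_ae (ae_of_all _ fun ω => ?_)).trans h
      by_cases hω : ω ∈ W ⁻¹' u <;> simp [hω]
    · refine (hlam.indicator hWu).congr (ae_of_all _ fun ω => ?_)
      by_cases hω : ω ∈ W ⁻¹' u <;> simp [hω]
  calc P.real (W ⁻¹' u ∩ (s ∩ A))
      = ∫ ω in s, (A ∩ W ⁻¹' u).indicator (fun _ => (1 : ℝ)) ω ∂P := by
        rw [setIntegral_indicator (hA.inter hWu), setIntegral_const, smul_eq_mul, mul_one]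
        congr 1; ext ω; simp only [mem_inter_iff]; tauto
    _ = ∫ ω in s, cprob m P (A ∩ W ⁻¹' u) ω ∂P :=
        (setIntegral_condExp hm ((integrable_const 1).indicator (hA.inter hWu)) hs).symm
    _ = ∫ ω in s, P[(W ⁻¹' u).indicator (cprob m P A)|m] ω ∂P :=
        setIntegral_congr_ae (hm s hs) (((hAW u hu).trans hpull.symm).mono fun _ h _ => h)
    _ = ∫ ω in W ⁻¹' u ∩ s, cprob m P A ω ∂P := by
        rw [setIntegral_condExp hm (hlam.indicator hWu) hs, setIntegral_indicator hWu, inter_comm]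

lemma setIntegral_indicator_comp_eq_setIntegral_cprob_mul (hm : m ≤ m0) (hA : MeasurableSet A)
    (hW : Measurable W) (hAW : CondIndepSetFunGiven m A W P)
    {h : γ → ℝ} (hh : Measurable h) {s : Set Ω} (hs : MeasurableSet[m] s) :
    ∫ ω in s, A.indicator (fun ω => h (W ω)) ω ∂P = ∫ ω in s, cprob m P A ω * h (W ω) ∂P := by
  have hdens : Measurable fun ω => ENNReal.ofReal (cprob m P A ω) :=
    ENNReal.measurable_ofReal.comp ((stronglyMeasurable_cprob A).mono hm).measurable
  calc ∫ ω in s, A.indicator (fun ω => h (W ω)) ω ∂P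
      = ∫ y, h y ∂(P.restrict (s ∩ A)).map W := by
        rw [setIntegral_indicator hA, integral_map hW.aemeasurable hh.aestronglyMeasurable]
    _ = ∫ y, h y ∂((P.restrict s).withDensity fun ω => ENNReal.ofReal (cprob m P A ω)).map W := by
        rw [map_restrict_inter_eq_map_withDensity_cprob hm hA hW hAW hs]
    _ = ∫ ω in s, (ENNReal.ofReal (cprob m P A ω)).toReal • h (W ω) ∂P := by
        rw [integral_map hW.aemeasurable hh.aestronglyMeasurable,
          integral_withDensity_eq_integral_toReal_smul hdens
            (ae_of_all _ fun _ => ENNReal.ofReal_lt_top)]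
    _ = ∫ ω in s, cprob m P A ω * h (W ω) ∂P := by
        refine setIntegral_congr_ae (hm s hs) ((cprob_nonneg (m := m) A).mono fun ω hω _ => ?_)
        rw [ENNReal.toReal_ofReal hω, smul_eq_mul]

lemma condExp_indicator_comp_ae_eq_cprob_mul (hm : m ≤ m0) (hA : MeasurableSet A)
    (hW : Measurable W) (hAW : CondIndepSetFunGiven m A W P)
    {h : γ → ℝ} (hh : Measurable h) (hhW : Integrable (fun ω => h (W ω)) P) :
    P[A.indicator (fun ω => h (W ω))|m] =ᵐ[P] fun ω => cprob m P A ω * P[fun ω => h (W ω)|m] ω := by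
  have hpull := condExp_stronglyMeasurable_mul_of_bound hm (stronglyMeasurable_cprob A) hhW 1
    (norm_cprob_le_one hm hA)
  refine (ae_eq_condExp_of_forall_setIntegral_eq hm (hhW.indicator hA)
    (fun s _ _ => (integrable_condExp.congr hpull).integrableOn) (fun s hs _ => ?_)
    ((stronglyMeasurable_cprob A).mul stronglyMeasurable_condExp).aestronglyMeasurable).symm
  rw [setIntegral_indicator_comp_eq_setIntegral_cprob_mul hm hA hW hAW hh hs]
  calc ∫ ω in s, cprob m P A ω * P[fun ω => h (W ω)|m] ω ∂P
      = ∫ ω in s, P[fun ω => cprob m P A ω * h (W ω)|m] ω ∂P :=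
        setIntegral_congr_ae (hm s hs) (hpull.mono fun ω hω _ => hω.symm)
    _ = ∫ ω in s, cprob m P A ω * h (W ω) ∂P :=
        setIntegral_condExp hm
          (hhW.bdd_mul ((stronglyMeasurable_cprob A).mono hm).aestronglyMeasurable
            (norm_cprob_le_one hm hA)) hs

lemma integral_indicator_mul_comp_eq_integral_cprob_mul (hm : m ≤ m0) (hA : MeasurableSet A)
    (hW : Measurable W) (hAW : CondIndepSetFunGiven m A W P)
    {h : γ → ℝ} (hh : Measurable h) (hhW : Integrable (fun ω => h (W ω)) P)
    {f : Ω → ℝ} (hf : StronglyMeasurable[m] f) {c : ℝ} (hfc : ∀ᵐ ω ∂P, ‖f ω‖ ≤ c) :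
    ∫ ω, A.indicator (fun ω => f ω * h (W ω)) ω ∂P
      = ∫ ω, cprob m P A ω * f ω * h (W ω) ∂P := by
  have hfcprob : ∀ᵐ ω ∂P, ‖f ω * cprob m P A ω‖ ≤ c * 1 := by
    filter_upwards [hfc, norm_cprob_le_one hm hA] with ω hfω hcprob
      using norm_mul_le_of_le hfω hcprob
  calc ∫ ω, A.indicator (fun ω => f ω * h (W ω)) ω ∂P
      = ∫ ω, f ω * A.indicator (fun ω => h (W ω)) ω ∂P := by
        simp only [indicator_mul_right]
    _ = ∫ ω, f ω * P[A.indicator (fun ω => h (W ω))|m] ω ∂P :=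
        (integral_mul_condExp hm hf hfc (hhW.indicator hA)).symm
    _ = ∫ ω, (f ω * cprob m P A ω) * P[fun ω => h (W ω)|m] ω ∂P := by
        refine integral_congr_ae ?_
        filter_upwards [condExp_indicator_comp_ae_eq_cprob_mul hm hA hW hAW hh hhW] with ω hω
        rw [hω, mul_assoc]
    _ = ∫ ω, (f ω * cprob m P A ω) * h (W ω) ∂P :=
        integral_mul_condExp hm (hf.mul (stronglyMeasurable_cprob A)) hfcprob hhW
    _ = ∫ ω, cprob m P A ω * f ω * h (W ω) ∂P := by
        simp only [mul_comm (f _)]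

end MissingAtRandom

section DoubleRobustness

variable {Ω γ : Type*} {m m0 : MeasurableSpace Ω} [MeasurableSpace γ] {P : Measure Ω}
  [IsFiniteMeasure P] {A : Set Ω} {W : Ω → γ} {h : γ → ℝ} {ε C : ℝ} {l τ : Ω → ℝ}

lemma integral_indicator_mul_eq_of_ae_eq_condExp_cond (hm : m ≤ m0) (hA : MeasurableSet A)
    (hPA : P A ≠ 0) {f : Ω → ℝ} (hf : StronglyMeasurable[m] f) {c : ℝ}
    (hfc : ∀ᵐ ω ∂P, ‖f ω‖ ≤ c) {Z τ : Ω → ℝ} (hZ : Integrable Z P)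
    (hτ : τ =ᵐ[P[|A]] P[|A][Z|m]) :
    ∫ ω, A.indicator (fun ω => f ω * Z ω) ω ∂P = ∫ ω, A.indicator (fun ω => f ω * τ ω) ω ∂P := by
  rw [integral_indicator_eq_measureReal_mul_integral_cond hA hPA,
    integral_indicator_eq_measureReal_mul_integral_cond hA hPA,
    ← integral_mul_condExp hm hf (cond_absolutelyContinuous.ae_le hfc) (hZ.cond hPA)]
  congr 1
  exact integral_congr_ae (hτ.mono fun ω hω => by simp only [hω])

lemma integral_indicator_inv_mul_sub_eq_sub (hm : m ≤ m0) (hA : MeasurableSet A) {Z : Ω → ℝ}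
    (hZ : Integrable Z P) (hε : 0 < ε) (hl : StronglyMeasurable[m] l)
    (hlε : ∀ᵐ ω ∂P, ε ≤ l ω) (hτ : StronglyMeasurable[m] τ) (hτC : ∀ᵐ ω ∂P, ‖τ ω‖ ≤ C) :
    ∫ ω, A.indicator (fun ω => (l ω)⁻¹ * (Z ω - τ ω)) ω ∂P
      = ∫ ω, A.indicator (fun ω => (l ω)⁻¹ * Z ω) ω ∂P
        - ∫ ω, A.indicator (fun ω => (l ω)⁻¹ * τ ω) ω ∂P := by
  have hlinv : AEStronglyMeasurable (fun ω => (l ω)⁻¹) P :=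
    (hl.mono hm).measurable.inv.aestronglyMeasurable
  have hlinvε := hlε.mono fun ω => norm_inv_le_inv_of_le hε
  simp only [mul_sub, indicator_sub]
  have hτint : Integrable τ P := .of_bound (hτ.mono hm).aestronglyMeasurable C hτC
  exact integral_sub ((hZ.bdd_mul hlinv hlinvε).indicator hA)
    ((hτint.bdd_mul hlinv hlinvε).indicator hA)

lemma integral_add_integral_indicator_inv_mul_sub_of_ae_eq_cprob (hm : m ≤ m0)
    (hA : MeasurableSet A) (hW : Measurable W) (hAW : CondIndepSetFunGiven m A W P)
    (hh : Measurable h) (hhW : Integrable (fun ω => h (W ω)) P) (hε : 0 < ε)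
    (hl : StronglyMeasurable[m] l) (hlε : ∀ᵐ ω ∂P, ε ≤ l ω) (hτ : StronglyMeasurable[m] τ)
    (hτC : ∀ᵐ ω ∂P, ‖τ ω‖ ≤ C) (hlA : l =ᵐ[P] cprob m P A) :
    ∫ ω, τ ω ∂P + ∫ ω, A.indicator (fun ω => (l ω)⁻¹ * (h (W ω) - τ ω)) ω ∂P
      = ∫ ω, h (W ω) ∂P := by
  have hlinvε := hlε.mono fun ω => norm_inv_le_inv_of_le hε
  have hcancel : ∀ᵐ ω ∂P, cprob m P A ω * (l ω)⁻¹ = 1 := by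
    filter_upwards [hlA, hlε] with ω hlAω hlεω
    rw [← hlAω, mul_inv_cancel₀ (hε.trans_le hlεω).ne']
  have hZ : ∫ ω, A.indicator (fun ω => (l ω)⁻¹ * h (W ω)) ω ∂P = ∫ ω, h (W ω) ∂P := by
    rw [integral_indicator_mul_comp_eq_integral_cprob_mul hm hA hW hAW hh hhW
      (f := fun ω => (l ω)⁻¹) hl.measurable.inv.stronglyMeasurable hlinvε]
    exact integral_congr_ae (hcancel.mono fun ω hω => by simp only [hω, one_mul])
  have hτ' : ∫ ω, A.indicator (fun ω => (l ω)⁻¹ * τ ω) ω ∂P = ∫ ω, τ ω ∂P := by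
    rw [integral_indicator_eq_integral_cprob_mul hm hA (f := fun ω => (l ω)⁻¹ * τ ω)
      (hl.measurable.inv.stronglyMeasurable.mul hτ)
      (by filter_upwards [hlinvε, hτC] with ω h₁ h₂ using norm_mul_le_of_le h₁ h₂)]
    exact integral_congr_ae (hcancel.mono fun ω hω => by simp only [← mul_assoc, hω, one_mul])
  rw [integral_indicator_inv_mul_sub_eq_sub hm hA hhW hε hl hlε hτ hτC, hZ, hτ']
  ring

lemma integral_add_integral_indicator_inv_mul_sub_of_ae_eq_condExp_cond (hm : m ≤ m0)
    (hA : MeasurableSet A) (hPA : P A ≠ 0) (hW : Measurable W) (hAW : CondIndepSetFunGiven m A W P)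
    (hh : Measurable h) (hhW : Integrable (fun ω => h (W ω)) P) (hε : 0 < ε)
    (hAε : ∀ᵐ ω ∂P, ε ≤ cprob m P A ω) (hl : StronglyMeasurable[m] l) (hlε : ∀ᵐ ω ∂P, ε ≤ l ω)
    (hτ : StronglyMeasurable[m] τ) (hτC : ∀ᵐ ω ∂P, ‖τ ω‖ ≤ C)
    (hτA : τ =ᵐ[P[|A]] P[|A][fun ω => h (W ω)|m]) :
    ∫ ω, τ ω ∂P + ∫ ω, A.indicator (fun ω => (l ω)⁻¹ * (h (W ω) - τ ω)) ω ∂P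
      = ∫ ω, h (W ω) ∂P := by
  have hcprob : StronglyMeasurable[m] fun ω => (cprob m P A ω)⁻¹ :=
    (stronglyMeasurable_cprob A).measurable.inv.stronglyMeasurable
  have hcprobε := hAε.mono fun ω => norm_inv_le_inv_of_le hε
  have hcancel : ∀ᵐ ω ∂P, cprob m P A ω * (cprob m P A ω)⁻¹ = 1 :=
    hAε.mono fun ω hω => mul_inv_cancel₀ (hε.trans_le hω).ne'
  have hresidual : ∫ ω, A.indicator (fun ω => (l ω)⁻¹ * h (W ω)) ω ∂P
      = ∫ ω, A.indicator (fun ω => (l ω)⁻¹ * τ ω) ω ∂P :=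
    integral_indicator_mul_eq_of_ae_eq_condExp_cond hm hA hPA hl.measurable.inv.stronglyMeasurable
      (hlε.mono fun ω => norm_inv_le_inv_of_le hε) hhW hτA
  -- inverse probability weighting: `E[Z] = E[1_A Z / cprob m P A]`, and the same for `τ`
  have hipw : ∫ ω, τ ω ∂P = ∫ ω, h (W ω) ∂P := calc
    ∫ ω, τ ω ∂P = ∫ ω, cprob m P A ω * ((cprob m P A ω)⁻¹ * τ ω) ∂P :=
        integral_congr_ae (hcancel.mono fun ω hω => by simp only [← mul_assoc, hω, one_mul])
    _ = ∫ ω, A.indicator (fun ω => (cprob m P A ω)⁻¹ * τ ω) ω ∂P :=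
        (integral_indicator_eq_integral_cprob_mul hm hA (hcprob.mul hτ)
          (by filter_upwards [hcprobε, hτC] with ω h₁ h₂ using norm_mul_le_of_le h₁ h₂)).symm
    _ = ∫ ω, A.indicator (fun ω => (cprob m P A ω)⁻¹ * h (W ω)) ω ∂P :=
        (integral_indicator_mul_eq_of_ae_eq_condExp_cond hm hA hPA hcprob hcprobε hhW hτA).symm
    _ = ∫ ω, cprob m P A ω * (cprob m P A ω)⁻¹ * h (W ω) ∂P :=
        integral_indicator_mul_comp_eq_integral_cprob_mul hm hA hW hAW hh hhW hcprob hcprobε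
    _ = ∫ ω, h (W ω) ∂P :=
        integral_congr_ae (hcancel.mono fun ω hω => by simp only [hω, one_mul])
  rw [integral_indicator_inv_mul_sub_eq_sub hm hA hhW hε hl hlε hτ hτC, hresidual, sub_self,
    add_zero, hipw]

lemma integral_add_integral_indicator_inv_mul_sub_eq (hm : m ≤ m0) (hA : MeasurableSet A)
    (hPA : P A ≠ 0) (hW : Measurable W) (hAW : CondIndepSetFunGiven m A W P)
    (hh : Measurable h) (hhW : Integrable (fun ω => h (W ω)) P) (hε : 0 < ε)
    (hAε : ∀ᵐ ω ∂P, ε ≤ cprob m P A ω) (hl : StronglyMeasurable[m] l) (hlε : ∀ᵐ ω ∂P, ε ≤ l ω)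
    (hτ : StronglyMeasurable[m] τ) (hτC : ∀ᵐ ω ∂P, ‖τ ω‖ ≤ C)
    (hrob : l =ᵐ[P] cprob m P A ∨ τ =ᵐ[P[|A]] P[|A][fun ω => h (W ω)|m]) :
    ∫ ω, τ ω ∂P + ∫ ω, A.indicator (fun ω => (l ω)⁻¹ * (h (W ω) - τ ω)) ω ∂P
      = ∫ ω, h (W ω) ∂P :=
  hrob.elim
    (integral_add_integral_indicator_inv_mul_sub_of_ae_eq_cprob hm hA hW hAW hh hhW hε hl hlε hτ
      hτC)
    (integral_add_integral_indicator_inv_mul_sub_of_ae_eq_condExp_cond hm hA hPA hW hAW hh hhW hε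
      hAε hl hlε hτ hτC)

end DoubleRobustness

section Randomization

variable {Ω β δ : Type*} {m0 : MeasurableSpace Ω} [MeasurableSpace β] [MeasurableSpace δ]
  {P : Measure Ω} [IsFiniteMeasure P] {A : Set Ω}

lemma integral_indicator_indicator_mul_eq_of_indepFun (hA : MeasurableSet A) (hPA : P A ≠ 0)
    {T : Ω → β} {V : Ω → δ} (hT : Measurable T) (hV : Measurable V)
    (hTV : IndepFun T V P[|A]) {B : Set β} (hB : MeasurableSet B) {g : δ → ℝ}
    (hg : Measurable g) :
    ∫ ω, A.indicator (fun ω => (T ⁻¹' B).indicator (fun _ => (1 : ℝ)) ω * g (V ω)) ω ∂P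
      = P[|A].real (T ⁻¹' B) * ∫ ω, A.indicator (fun ω => g (V ω)) ω ∂P := by
  have hindep : IndepFun (fun ω => (T ⁻¹' B).indicator (fun _ => (1 : ℝ)) ω) (fun ω => g (V ω))
      P[|A] :=
    hTV.comp (measurable_const.indicator hB) hg
  rw [integral_indicator_eq_measureReal_mul_integral_cond hA hPA,
    integral_indicator_eq_measureReal_mul_integral_cond hA hPA,
    hindep.integral_fun_mul_eq_mul_integral
      (measurable_const.indicator (hT hB)).aestronglyMeasurable
      (hg.comp hV).aestronglyMeasurable,
    integral_indicator_const _ (hT hB), smul_eq_mul, mul_one]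
  ring

lemma integral_add_inv_mul_indicator_indicator_mul_of_indepFun (hA : MeasurableSet A)
    (hPA : P A ≠ 0) {T : Ω → β} {V : Ω → δ} (hT : Measurable T) (hV : Measurable V)
    (hTV : IndepFun T V P[|A]) {B : Set β} (hB : MeasurableSet B)
    (hπ : P[|A].real (T ⁻¹' B) ≠ 0) {g : δ → ℝ} (hg : Measurable g)
    (hgV : Integrable (fun ω => g (V ω)) P) {τ : Ω → ℝ} (hτ : Integrable τ P) :
    ∫ ω, τ ω + (P[|A].real (T ⁻¹' B))⁻¹
        * A.indicator (fun ω => (T ⁻¹' B).indicator (fun _ => (1 : ℝ)) ω * g (V ω)) ω ∂P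
      = ∫ ω, τ ω ∂P + ∫ ω, A.indicator (fun ω => g (V ω)) ω ∂P := by
  have hint : Integrable (fun ω => (T ⁻¹' B).indicator (fun _ => (1 : ℝ)) ω * g (V ω)) P :=
    hgV.bdd_mul (measurable_const.indicator (hT hB)).aestronglyMeasurable
      (ae_of_all _ fun _ => (norm_indicator_le_norm_self _ _).trans_eq norm_one)
  rw [integral_add hτ ((hint.indicator hA).const_mul _), integral_const_mul,
    integral_indicator_indicator_mul_eq_of_indepFun hA hPA hT hV hTV hB hg, ← mul_assoc,
    inv_mul_cancel₀ hπ, one_mul]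

end Randomization

lemma aipw_integrand_eq {Ω : Type*} {R T Y Z l τ : Ω → ℝ} {t π : ℝ} {ω : Ω}
    (hR : R ω = 0 ∨ R ω = 1) (hYZ : T ω = t → Y ω = Z ω) :
    R ω * (if T ω = t then 1 else 0) * Y ω / (l ω * π)
        + (1 - R ω * (if T ω = t then 1 else 0) / (l ω * π)) * τ ω
      = τ ω + π⁻¹ * {ω | R ω = 1}.indicator (fun ω =>
          (T ⁻¹' {t}).indicator (fun _ => 1) ω * ((l ω)⁻¹ * (Z ω - τ ω))) ω := by
  by_cases hT : T ω = t
  · rcases hR with hR | hR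
    · simp [hR]
    · rw [indicator_of_mem (show ω ∈ {ω | R ω = 1} from hR),
        indicator_of_mem (show ω ∈ T ⁻¹' {t} from hT), hR, if_pos hT, hYZ hT]
      ring
  · simp [hT]

lemma exists_potentialOutcome_eq_comp {Ω : Type*} [MeasurableSpace Ω] {P : Measure Ω}
    {T Y₁ Y₀ Y : Ω → ℝ} {Yt : ℝ → Ω → ℝ} {t : ℝ} (ht : t = 0 ∨ t = 1)
    (hY : Y = fun ω => T ω * Y₁ ω + (1 - T ω) * Y₀ ω) (hYt1 : Yt 1 = Y₁) (hYt0 : Yt 0 = Y₀)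
    (hY₁ : Integrable Y₁ P) (hY₀ : Integrable Y₀ P) :
    ∃ h : ℝ × ℝ → ℝ, Measurable h ∧ Yt t = (fun ω => h (Y₁ ω, Y₀ ω))
      ∧ (∀ ω, T ω = t → Y ω = h (Y₁ ω, Y₀ ω)) ∧ Integrable (fun ω => h (Y₁ ω, Y₀ ω)) P := by
  rcases ht with rfl | rfl
  · exact ⟨Prod.snd, measurable_snd, hYt0, fun ω hω => by simp [hY, hω], hY₀⟩
  · exact ⟨Prod.fst, measurable_fst, hYt1, fun ω hω => by simp [hY, hω], hY₁⟩

theorem stmt7_general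
    {Ω 𝒳 : Type*} [MeasurableSpace Ω] [MeasurableSpace 𝒳]
    (P : Measure Ω) [IsProbabilityMeasure P]
    (X : Ω → 𝒳) (R T Y₁ Y₀ Y : Ω → ℝ) (Yt : ℝ → Ω → ℝ)
    (hX : Measurable X) (hR : Measurable R) (hT : Measurable T)
    (hY₁m : Measurable Y₁) (hY₀m : Measurable Y₀)
    (hRbin : ∀ ω, R ω = 0 ∨ R ω = 1)
    (hY₁2 : MemLp Y₁ 2 P) (hY₀2 : MemLp Y₀ 2 P)
    (hY : Y = fun ω => T ω * Y₁ ω + (1 - T ω) * Y₀ ω)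
    (hYt1 : Yt 1 = Y₁) (hYt0 : Yt 0 = Y₀)
    (ε : ℝ) (hε : 0 < ε)
    (hlam_pos : 0 < P {ω | R ω = 1})
    (hlamX : ∀ᵐ ω ∂P, ε ≤ cprob (sigmaX X) P {ω' | R ω' = 1} ω ∧
      cprob (sigmaX X) P {ω' | R ω' = 1} ω ≤ 1 - ε)
    (hpi : ∀ r ∈ ({0, 1} : Set ℝ), ∀ t ∈ ({0, 1} : Set ℝ), ∀ᵐ ω ∂P,
      ε ≤ cprob (sigmaX X) (ProbabilityTheory.cond P {ω' | R ω' = r}) {ω' | T ω' = t} ω ∧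
      cprob (sigmaX X) (ProbabilityTheory.cond P {ω' | R ω' = r}) {ω' | T ω' = t} ω ≤ 1 - ε)
    (hA1 : IndepFun T (fun ω => (Y₁ ω, Y₀ ω, X ω)) (ProbabilityTheory.cond P {ω | R ω = 1}))
    (hA3 : CondIndepFunGiven (sigmaX X) R (fun ω => (Y₁ ω, Y₀ ω)) P)
    (t : ℝ) (ht : t = 0 ∨ t = 1)
    (lamd : 𝒳 → ℝ) (hlamdm : Measurable lamd) (hlamdr : ∀ x, lamd x ∈ Set.Icc ε (1 - ε))
    (τd : 𝒳 → ℝ) (hτdm : Measurable τd) (hτdb : ∃ C, ∀ x, |τd x| ≤ C)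
    (hrob : (fun ω => lamd (X ω)) =ᵐ[P] cprob (sigmaX X) P {ω' | R ω' = 1} ∨
      (fun ω => τd (X ω)) =ᵐ[P] cexp (sigmaX X) (ProbabilityTheory.cond P {ω' | R ω' = 1}) (Yt t))
    :
    ∫ ω, (R ω * (if T ω = t then (1 : ℝ) else 0) * Y ω / (lamd (X ω) * ((ProbabilityTheory.cond P {ω' | R ω' = 1}) {ω' | T ω' = t}).toReal)
      + (1 - R ω * (if T ω = t then (1 : ℝ) else 0) / (lamd (X ω) * ((ProbabilityTheory.cond P {ω' | R ω' = 1}) {ω' | T ω' = t}).toReal)) * τd (X ω)) ∂P = (∫ ω', Yt t ω' ∂P) := by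
  have hm : sigmaX X ≤ ‹MeasurableSpace Ω› := hX.comap_le
  have hXm : Measurable[sigmaX X] X := comap_measurable X
  set A := {ω | R ω = 1}
  have hPA : P A ≠ 0 := hlam_pos.ne'
  have : IsProbabilityMeasure P[|A] := cond_isProbabilityMeasure hPA
  obtain ⟨C, hC⟩ := hτdb
  obtain ⟨h, hh, hZ, hYZ, hhW⟩ := exists_potentialOutcome_eq_comp ht hY hYt1 hYt0
    (hY₁2.integrable one_le_two) (hY₀2.integrable one_le_two)
  have hπ : ε ≤ P[|A].real (T ⁻¹' {t}) :=
    le_measureReal_of_ae_le_cprob hm (hT (measurableSet_singleton t))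
      (cond_absolutelyContinuous.ae_le
        ((hpi 1 (by simp) t (by rcases ht with rfl | rfl <;> simp)).mono fun _ h => h.1))
  have hlε : ∀ᵐ ω ∂P, ε ≤ lamd (X ω) := ae_of_all _ fun ω => (hlamdr (X ω)).1
  have hτC : ∀ᵐ ω ∂P, ‖τd (X ω)‖ ≤ C :=
    ae_of_all _ fun ω => (Real.norm_eq_abs _).trans_le (hC (X ω))
  have hτint : Integrable (fun ω => τd (X ω)) P :=
    Integrable.of_bound (hτdm.comp hX).aestronglyMeasurable C hτC
  calc _ = ∫ ω, τd (X ω) + (P[|A].real (T ⁻¹' {t}))⁻¹ * A.indicator (fun ω =>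
        (T ⁻¹' {t}).indicator (fun _ => 1) ω
          * ((lamd (X ω))⁻¹ * (h (Y₁ ω, Y₀ ω) - τd (X ω)))) ω ∂P :=
        integral_congr_ae (ae_of_all _ fun ω => aipw_integrand_eq (l := fun ω => lamd (X ω))
          (τ := fun ω => τd (X ω)) (hRbin ω) (hYZ ω))
    _ = ∫ ω, τd (X ω) ∂P + ∫ ω, A.indicator (fun ω =>
          (lamd (X ω))⁻¹ * (h (Y₁ ω, Y₀ ω) - τd (X ω))) ω ∂P :=
        integral_add_inv_mul_indicator_indicator_mul_of_indepFun (hR (measurableSet_singleton 1))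
          hPA hT (hY₁m.prodMk (hY₀m.prodMk hX)) hA1 (measurableSet_singleton t)
          (hε.trans_le hπ).ne'
          (g := fun p => (lamd p.2.2)⁻¹ * (h (p.1, p.2.1) - τd p.2.2)) (by fun_prop)
          ((hhW.sub hτint).bdd_mul (hlamdm.comp hX).inv.aestronglyMeasurable
            (hlε.mono fun _ => norm_inv_le_inv_of_le hε)) hτint
    _ = ∫ ω', Yt t ω' ∂P := hZ ▸ integral_add_integral_indicator_inv_mul_sub_eq hm
        (hR (measurableSet_singleton 1)) hPA (hY₁m.prodMk hY₀m)
        (hA3.condIndepSetFunGiven_preimage (measurableSet_singleton 1)) hh hhW hε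
        (hlamX.mono fun _ h => h.1) (hlamdm.comp hXm).stronglyMeasurable hlε
        (hτdm.comp hXm).stronglyMeasurable hτC
        (hrob.imp_right fun hτ => cond_absolutelyContinuous.ae_le (hZ ▸ hτ))

theorem stmt7
    {Ω 𝒳 : Type*} [MeasurableSpace Ω] [MeasurableSpace 𝒳] [StandardBorelSpace 𝒳]
    (P : Measure Ω) [IsProbabilityMeasure P]
    (X : Ω → 𝒳) (R T Y₁ Y₀ Y : Ω → ℝ) (Yt : ℝ → Ω → ℝ)
    (hX : Measurable X) (hR : Measurable R) (hT : Measurable T)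
    (hY₁m : Measurable Y₁) (hY₀m : Measurable Y₀)
    (hRbin : ∀ ω, R ω = 0 ∨ R ω = 1) (hTbin : ∀ ω, T ω = 0 ∨ T ω = 1)
    (hY₁2 : MemLp Y₁ 2 P) (hY₀2 : MemLp Y₀ 2 P)
    (hY : Y = fun ω => T ω * Y₁ ω + (1 - T ω) * Y₀ ω)
    (hYt1 : Yt 1 = Y₁) (hYt0 : Yt 0 = Y₀)
    (ε : ℝ) (hε : 0 < ε)
    (hlam_pos : 0 < P {ω | R ω = 1}) (hlam_lt : P {ω | R ω = 1} < 1)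
    (hlamX : ∀ᵐ ω ∂P, ε ≤ cprob (sigmaX X) P {ω' | R ω' = 1} ω ∧
      cprob (sigmaX X) P {ω' | R ω' = 1} ω ≤ 1 - ε)
    (hpi : ∀ r ∈ ({0, 1} : Set ℝ), ∀ t ∈ ({0, 1} : Set ℝ), ∀ᵐ ω ∂P,
      ε ≤ cprob (sigmaX X) (ProbabilityTheory.cond P {ω' | R ω' = r}) {ω' | T ω' = t} ω ∧
      cprob (sigmaX X) (ProbabilityTheory.cond P {ω' | R ω' = r}) {ω' | T ω' = t} ω ≤ 1 - ε)
    (hA1 : IndepFun T (fun ω => (Y₁ ω, Y₀ ω, X ω)) (ProbabilityTheory.cond P {ω | R ω = 1}))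
    (hA3 : CondIndepFunGiven (sigmaX X) R (fun ω => (Y₁ ω, Y₀ ω)) P)
    (t : ℝ) (ht : t = 0 ∨ t = 1)
    (lamd : 𝒳 → ℝ) (hlamdm : Measurable lamd) (hlamdr : ∀ x, lamd x ∈ Set.Icc ε (1 - ε))
    (τd : 𝒳 → ℝ) (hτdm : Measurable τd) (hτdb : ∃ C, ∀ x, |τd x| ≤ C)
    (hrob : (fun ω => lamd (X ω)) =ᵐ[P] cprob (sigmaX X) P {ω' | R ω' = 1} ∨
      (fun ω => τd (X ω)) =ᵐ[P] cexp (sigmaX X) (ProbabilityTheory.cond P {ω' | R ω' = 1}) (Yt t))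
    :
    ∫ ω, (R ω * (if T ω = t then (1 : ℝ) else 0) * Y ω / (lamd (X ω) * ((ProbabilityTheory.cond P {ω' | R ω' = 1}) {ω' | T ω' = t}).toReal)
      + (1 - R ω * (if T ω = t then (1 : ℝ) else 0) / (lamd (X ω) * ((ProbabilityTheory.cond P {ω' | R ω' = 1}) {ω' | T ω' = t}).toReal)) * τd (X ω)) ∂P = (∫ ω', Yt t ω' ∂P) :=
  stmt7_general P X R T Y₁ Y₀ Y Yt hX hR hT hY₁m hY₀m hRbin hY₁2 hY₀2 hY hYt1 hYt0 ε hε hlam_pos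
    hlamX hpi hA1 hA3 t ht lamd hlamdm hlamdr τd hτdm hτdb hrob
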